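/- Let Γ be a group and j : Γ → G₀ a homomorphism such that the action of Γ on ℍ² via j is properly discontinuous. Let u : Γ → ℝ³ be a j-cocycle and let X be a (j,u)-equivariant vector field on ℍ² that is k-lipschitz for some k < 0. Then: (i) for every v ∈ ℝ³ there is a unique point ϖ(v) ∈ ℍ² such that v ∧ ϖ(v) = X(ϖ(v)); (ii) the map ϖ : ℝ³ → ℍ² is continuous and surjective; (iii) ϖ(j(γ)·v + u(γ)) = j(γ)·ϖ(v) for all γ ∈ Γ and v ∈ ℝ³; (iv) the affine action of Γ on ℝ³ defined by (j,u) is properly discontinuous. (Thus the fibers ϖ⁻¹(p) = {v : v ∧ p = X(p)}, which are timelike affine lines, form an equivariant fibration of Minkowski space over ℍ².) -/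

import Mathlib

noncomputable section

/-- Minkowski space `ℝ^{2,1}` as `Fin 3 → ℝ`. -/
abbrev V : Type := Fin 3 → ℝ

/-- The Minkowski form `⟨x|y⟩ = x₁y₁ + x₂y₂ − x₃y₃`. -/
def mink (x y : V) : ℝ := x 0 * y 0 + x 1 * y 1 - x 2 * y 2

/-- The Minkowski cross product. -/
def mcross (x y : V) : V :=
  ![x 1 * y 2 - x 2 * y 1, x 2 * y 0 - x 0 * y 2, -(x 0 * y 1) + x 1 * y 0]

/-- The hyperbolic plane: upper sheet of the hyperboloid. -/
def H2 : Set V := {p | mink p p = -1 ∧ 0 < p 2}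

/-- Inverse hyperbolic cosine. -/
def acosh (x : ℝ) : ℝ := Real.log (x + Real.sqrt (x ^ 2 - 1))

/-- Hyperbolic distance. -/
def hdist (p q : V) : ℝ := acosh (-(mink p q))

/-- Norm of a (spacelike) tangent vector. -/
def mnorm (x : V) : ℝ := Real.sqrt (mink x x)

/-- The point `exp_p(t x)`. -/
def mexp (p x : V) (t : ℝ) : V :=
  if x = 0 then p
  else Real.cosh (t * mnorm x) • p + (Real.sinh (t * mnorm x) / mnorm x) • x

/-- `d'(x_p, x_q)`: the derivative at `t = 0` of `t ↦ d(exp_p(t x_p), exp_q(t x_q))`. -/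
def dprime (p xp q xq : V) : ℝ :=
  deriv (fun t => hdist (mexp p xp t) (mexp q xq t)) 0

/-- A convex field on `ℍ²`. -/
def IsConvexField (X : Set (V × V)) : Prop :=
  IsClosed X ∧ (∀ px ∈ X, px.1 ∈ H2 ∧ mink px.2 px.1 = 0) ∧
    ∀ p : V, Convex ℝ {x : V | (p, x) ∈ X}

/-- The fiber `X(p)` of a convex field. -/
def fiberAt (X : Set (V × V)) (p : V) : Set V := {x | (p, x) ∈ X}

/-- A convex field is defined over `A` if all fibers over `A` are nonempty. -/
def DefinedOver (X : Set (V × V)) (A : Set V) : Prop := ∀ p ∈ A, (fiberAt X p).Nonempty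

/-- A convex field is `k`-lipschitz. -/
def LipschitzField (k : ℝ) (X : Set (V × V)) : Prop :=
  ∀ p xp q xq, (p, xp) ∈ X → (q, xq) ∈ X → p ≠ q → dprime p xp q xq ≤ k * hdist p q

/-- A (continuous) vector field on `ℍ²`. -/
def IsVectorField (X : V → V) : Prop := ContinuousOn X H2 ∧ ∀ p ∈ H2, mink (X p) p = 0

/-- A vector field is `k`-lipschitz. -/
def LipschitzVF (k : ℝ) (X : V → V) : Prop :=
  ∀ p ∈ H2, ∀ q ∈ H2, p ≠ q → dprime p (X p) q (X q) ≤ k * hdist p q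

/-- Hyperbolic convexity of a subset of `ℍ²`. -/
def HConvex (C : Set V) : Prop :=
  ∀ p ∈ C, ∀ q ∈ C, ∀ m ∈ H2, hdist p m + hdist m q = hdist p q → m ∈ C

/-- Hyperbolic convex hull. -/
def hconvexHull (A : Set V) : Set V := ⋂₀ {C : Set V | A ⊆ C ∧ C ⊆ H2 ∧ HConvex C}

/-- Interior of a subset of `ℍ²` relative to `ℍ²`. -/
def relInterior (A : Set V) : Set V :=
  {p | p ∈ H2 ∧ ∃ O : Set V, IsOpen O ∧ p ∈ O ∧ O ∩ H2 ⊆ A}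

/-- Linear automorphisms of `ℝ³`, a group under composition. -/
abbrev GL3 : Type := V ≃ₗ[ℝ] V

/-- Membership in `G₀`: preserves the Minkowski form, determinant one, preserves `ℍ²`. -/
def InG0 (g : GL3) : Prop :=
  (∀ x y : V, mink (g x) (g y) = mink x y) ∧
    LinearMap.det g.toLinearMap = 1 ∧ ∀ p ∈ H2, g p ∈ H2

/-- Properly discontinuous action on (a subset of) a topological space. -/
def ProperlyDiscOn {Γ α : Type*} [TopologicalSpace α] (act : Γ → α → α) (S : Set α) : Prop :=
  ∀ K L : Set α, K ⊆ S → L ⊆ S → IsCompact K → IsCompact L →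
    {γ : Γ | (act γ '' K ∩ L).Nonempty}.Finite

/-- A `j`-cocycle. -/
def IsCocycle {Γ : Type*} [Group Γ] (j : Γ →* GL3) (u : Γ → V) : Prop :=
  ∀ γ₁ γ₂ : Γ, u (γ₁ * γ₂) = u γ₁ + j γ₁ (u γ₂)

/-- Convex cocompact homomorphism. -/
def ConvexCocompact {Γ : Type*} [Group Γ] (j : Γ →* GL3) : Prop :=
  Function.Injective j ∧
    ProperlyDiscOn (fun (γ : Γ) (p : V) => j γ p) H2 ∧
    ∃ C K : Set V, C.Nonempty ∧ IsClosed C ∧ C ⊆ H2 ∧ HConvex C ∧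
      (∀ γ : Γ, j γ '' C = C) ∧ IsCompact K ∧ C ⊆ ⋃ γ : Γ, j γ '' K

/-- The convex core of `j`. -/
def ConvexCore {Γ : Type*} [Group Γ] (j : Γ →* GL3) : Set V :=
  ⋂₀ {C : Set V | C.Nonempty ∧ IsClosed C ∧ C ⊆ H2 ∧ HConvex C ∧ ∀ γ : Γ, j γ '' C = C}

/-- `(j,u)`-equivariance of a convex field. -/
def EquivField {Γ : Type*} [Group Γ] (j : Γ →* GL3) (u : Γ → V) (X : Set (V × V)) : Prop :=
  ∀ (γ : Γ), ∀ p ∈ H2,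
    fiberAt X (j γ p) = (fun x => j γ x + mcross (u γ) (j γ p)) '' fiberAt X p

/-- `(j,u)`-equivariance of a vector field. -/
def EquivVF {Γ : Type*} [Group Γ] (j : Γ →* GL3) (u : Γ → V) (X : V → V) : Prop :=
  ∀ (γ : Γ), ∀ p ∈ H2, X (j γ p) = j γ (X p) + mcross (u γ) (j γ p)

/-- Translation length `λ(g) = inf_{p ∈ ℍ²} d(p, g·p)`. -/
def transLength (g : V → V) : ℝ := sInf ((fun p => hdist p (g p)) '' H2)

/-- A transformation is hyperbolic if its translation length is positive. -/
def IsHyperbolic (g : V → V) : Prop := 0 < transLength g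

/-- `cross(v)` as a linear map `w ↦ v ∧ w`. -/
def crossLM (v : V) : V →ₗ[ℝ] V where
  toFun w := mcross v w
  map_add' w₁ w₂ := by
    funext i
    fin_cases i <;>
      simp [mcross, Pi.add_apply] <;> ring
  map_smul' c w := by
    funext i
    fin_cases i <;>
      simp [mcross, Pi.smul_apply, smul_eq_mul] <;> ring

/-- `cross(v)` as a continuous linear map. -/
def crossCLM (v : V) : V →L[ℝ] V := LinearMap.toContinuousLinearMap (crossLM v)

/-- A geodesic line of `ℍ²`. -/
def IsGeodesicLine (ℓ : Set V) : Prop :=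
  ∃ a ∈ H2, ∃ b ∈ H2, a ≠ b ∧ ℓ = {m ∈ H2 | mink m (mcross a b) = 0}

/-- A `j(Γ)`-invariant geodesic lamination in the convex core. -/
def IsLamination {Γ : Type*} [Group Γ] (j : Γ →* GL3) (L : Set (Set V)) : Prop :=
  L.Nonempty ∧
  (∀ ℓ ∈ L, IsGeodesicLine ℓ ∧ ℓ ⊆ ConvexCore j) ∧
  (∀ ℓ₁ ∈ L, ∀ ℓ₂ ∈ L, ℓ₁ ≠ ℓ₂ → ℓ₁ ∩ ℓ₂ = ∅) ∧
  IsClosed (⋃₀ L) ∧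
  ∀ (γ : Γ), ∀ ℓ ∈ L, j γ '' ℓ ∈ L

/-- The geodesic flow on the tangent bundle. -/
def gflow (t : ℝ) (px : V × V) : V × V :=
  if px.2 = 0 then px
  else (mexp px.1 px.2 t,
    (mnorm px.2 * Real.sinh (t * mnorm px.2)) • px.1 + Real.cosh (t * mnorm px.2) • px.2)

/-- Parallel transport from `p` to `q` along the geodesic. -/
def ptransport (p q x : V) : V := x + (mink x q / (1 - mink p q)) • (p + q)

/-!
Along geodesics, `d'(x_p, x_q) = -(⟨x_p|q⟩ + ⟨p|x_q⟩) / sinh d(p,q)`. The Killing fields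
`p ↦ v ∧ p` have `d' = 0`, so for every `v` the field `X - v ∧ ·` is still `k`-lipschitz, and
`v ∧ p = X(p)` says exactly that `p` is a zero of it. A `k`-lipschitz field with `k < 0` has at
most one zero, and far from a base point it points back towards it, so a winding number argument
on a large disk produces a zero: this is `ϖ(v)`. Its distance to the base point is bounded in
terms of `v`; with the closed graph this gives continuity. Since `G₀` preserves `∧`, uniqueness
gives equivariance, and proper discontinuity is pulled back from `ℍ²` along the continuous
equivariant map `ϖ`.
-/

section Minkowski

lemma mink_comm (x y : V) : mink x y = mink y x := by unfold mink; ring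

lemma mink_sub_left (x y z : V) : mink (x - y) z = mink x z - mink y z := by
  unfold mink; simp only [Pi.sub_apply]; ring

lemma mink_sub_right (x y z : V) : mink x (y - z) = mink x y - mink x z := by
  rw [mink_comm, mink_sub_left, mink_comm y, mink_comm z]

lemma mink_zero_left (x : V) : mink 0 x = 0 := by simp [mink]

lemma mnorm_zero : mnorm 0 = 0 := by simp [mnorm, mink_zero_left]

lemma mnorm_nonneg (x : V) : 0 ≤ mnorm x := Real.sqrt_nonneg _

lemma continuous_mink : Continuous fun q : V × V => mink q.1 q.2 := by
  unfold mink; fun_prop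

lemma continuous_mcross : Continuous fun q : V × V => mcross q.1 q.2 := by
  refine continuous_pi fun i => ?_
  fin_cases i <;> (simp only [mcross]; fun_prop)

lemma mcross_add_left (a b c : V) : mcross (a + b) c = mcross a c + mcross b c := by
  funext i
  fin_cases i <;>
    simp only [mcross, Pi.add_apply, Fin.zero_eta, Fin.mk_one, Fin.reduceFinMk, Fin.isValue,
      Matrix.cons_val_zero, Matrix.cons_val_one, Matrix.cons_val] <;>
    ring

lemma mink_mcross_self (v p : V) : mink (mcross v p) p = 0 := by
  simp only [mink, mcross, Fin.isValue, Matrix.cons_val_zero, Matrix.cons_val_one, Matrix.cons_val]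
  ring

lemma mink_mcross_add_mink_mcross (v p q : V) :
    mink (mcross v p) q + mink p (mcross v q) = 0 := by
  simp only [mink, mcross, Fin.isValue, Matrix.cons_val_zero, Matrix.cons_val_one, Matrix.cons_val]
  ring

lemma mcross_mcross_of_mink_eq_zero {p x : V} (hp : p ∈ H2) (hx : mink x p = 0) :
    mcross (mcross p x) p = x := by
  have hpp : p 0 * p 0 + p 1 * p 1 - p 2 * p 2 = -1 := hp.1
  have hxp : x 0 * p 0 + x 1 * p 1 - x 2 * p 2 = 0 := hx
  funext i
  fin_cases i <;>
    simp only [mcross, Fin.zero_eta, Fin.mk_one, Fin.reduceFinMk, Fin.isValue,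
      Matrix.cons_val_zero, Matrix.cons_val_one, Matrix.cons_val]
  · linear_combination (-x 0) * hpp + p 0 * hxp
  · linear_combination (-x 1) * hpp + p 1 * hxp
  · linear_combination (-x 2) * hpp + p 2 * hxp

lemma mink_mcross_eq_det (x y z : V) :
    mink (mcross x y) z = Matrix.det (Matrix.of ![x, y, z]) := by
  simp only [Matrix.det_fin_three, Matrix.of_apply, Matrix.cons_val', Matrix.cons_val_fin_one, mink,
    mcross, Fin.isValue, Matrix.cons_val_zero, Matrix.cons_val_one, Matrix.cons_val]
  ring

lemma eq_of_mink_eq {a b : V} (h : ∀ z, mink a z = mink b z) : a = b := by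
  have h0 := h ![1, 0, 0]
  have h1 := h ![0, 1, 0]
  have h2 := h ![0, 0, 1]
  simp only [mink, Fin.isValue, Matrix.cons_val_zero, Matrix.cons_val_one, Matrix.cons_val, mul_one,
    mul_zero, add_zero, sub_zero, zero_add, zero_sub, neg_inj] at h0 h1 h2
  funext i; fin_cases i <;> assumption

lemma InG0.map_mcross {g : GL3} (hg : InG0 g) (x y : V) : mcross (g x) (g y) = g (mcross x y) := by
  set M := LinearMap.toMatrix' g.toLinearMap
  have hgM : ∀ w, g w = M.mulVec w := fun w => by
    rw [← Matrix.toLin'_apply, Matrix.toLin'_toMatrix']; rfl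
  have hrows : ∀ a b c : V, Matrix.of ![g a, g b, g c] = Matrix.of ![a, b, c] * M.transpose :=
    fun a b c => by
      ext i j
      fin_cases i <;> simp [Matrix.mul_apply, hgM, Matrix.mulVec, dotProduct, mul_comm]
  refine eq_of_mink_eq fun z => ?_
  obtain ⟨w, rfl⟩ := g.surjective z
  rw [hg.1, mink_mcross_eq_det, mink_mcross_eq_det, hrows, Matrix.det_mul, Matrix.det_transpose,
    LinearMap.det_toMatrix', hg.2.1, mul_one]

end Minkowski

section Hyperboloid

variable {p q x : V}

lemma sq_coord_two_of_mem_H2 (hp : p ∈ H2) : p 2 ^ 2 = 1 + p 0 ^ 2 + p 1 ^ 2 := by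
  have := hp.1; unfold mink at this; nlinarith

lemma one_le_coord_two_of_mem_H2 (hp : p ∈ H2) : 1 ≤ p 2 := by
  nlinarith [sq_coord_two_of_mem_H2 hp, hp.2, sq_nonneg (p 0), sq_nonneg (p 1)]

lemma mink_lt_neg_one (hp : p ∈ H2) (hq : q ∈ H2) (hne : p ≠ q) : mink p q < -1 := by
  have hsp := sq_coord_two_of_mem_H2 hp
  have hsq := sq_coord_two_of_mem_H2 hq
  have hpq := mul_pos hp.2 hq.2
  have hco : 0 < (p 0 - q 0) ^ 2 + (p 1 - q 1) ^ 2 := by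
    by_contra! h
    have h0 : p 0 = q 0 := by nlinarith [sq_nonneg (p 0 - q 0), sq_nonneg (p 1 - q 1)]
    have h1 : p 1 = q 1 := by nlinarith [sq_nonneg (p 0 - q 0), sq_nonneg (p 1 - q 1)]
    have h2 : p 2 = q 2 := by
      have : p 2 ^ 2 = q 2 ^ 2 := by rw [hsp, hsq, h0, h1]
      nlinarith [hp.2, hq.2]
    exact hne (funext fun i => by fin_cases i <;> assumption)
  unfold mink
  nlinarith [sq_nonneg (p 0 * q 1 - p 1 * q 0), sq_nonneg (p 2 * q 2 + (1 + p 0 * q 0 + p 1 * q 1))]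

/-- The Minkowski form is positive definite on the tangent plane `p^⊥`, quantitatively. -/
lemma sq_coord_le_mink_self_of_tangent (hp : p ∈ H2) (hx : mink x p = 0) :
    x 0 ^ 2 + x 1 ^ 2 ≤ p 2 ^ 2 * mink x x := by
  have hxp : x 2 * p 2 = x 0 * p 0 + x 1 * p 1 := by unfold mink at hx; linarith
  have : p 2 ^ 2 * mink x x = x 0 ^ 2 + x 1 ^ 2 + (x 0 * p 1 - x 1 * p 0) ^ 2 := by
    unfold mink
    linear_combination (x 0 ^ 2 + x 1 ^ 2) * sq_coord_two_of_mem_H2 hp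
      - (x 2 * p 2 + x 0 * p 0 + x 1 * p 1) * hxp
  nlinarith [sq_nonneg (x 0 * p 1 - x 1 * p 0)]

lemma mink_self_nonneg_of_tangent (hp : p ∈ H2) (hx : mink x p = 0) : 0 ≤ mink x x := by
  have := sq_coord_le_mink_self_of_tangent hp hx
  have := hp.2
  by_contra! h
  nlinarith [sq_nonneg (x 0), sq_nonneg (x 1), mul_pos this this]

lemma eq_zero_of_tangent_of_coord_eq_zero (hp : p ∈ H2) (hx : mink x p = 0) (h0 : x 0 = 0)
    (h1 : x 1 = 0) : x = 0 := by
  have h2 : x 2 * p 2 = 0 := by unfold mink at hx; rw [h0, h1] at hx; linarith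
  have h2 : x 2 = 0 := (mul_eq_zero.1 h2).resolve_right hp.2.ne'
  funext i; fin_cases i <;> assumption

lemma mink_self_pos_of_tangent (hp : p ∈ H2) (hx : mink x p = 0) (hne : x ≠ 0) :
    0 < mink x x := by
  refine (mink_self_nonneg_of_tangent hp hx).lt_of_ne' fun h0 => hne ?_
  have h := sq_coord_le_mink_self_of_tangent hp hx
  rw [h0, mul_zero] at h
  exact eq_zero_of_tangent_of_coord_eq_zero hp hx (by nlinarith [sq_nonneg (x 0), sq_nonneg (x 1)])
    (by nlinarith [sq_nonneg (x 0), sq_nonneg (x 1)])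

lemma sq_mink_le_of_tangent {w : V} (hp : p ∈ H2) (hx : mink x p = 0) (hw : mink w p = 0) :
    mink x w ^ 2 ≤ mink x x * mink w w := by
  have key : ∀ t : ℝ, 0 ≤ mink w w * (t * t) + 2 * mink x w * t + mink x x := fun t => by
    have hxt : mink (x + t • w) p = 0 := by
      unfold mink at hx hw ⊢
      simp only [Pi.add_apply, Pi.smul_apply, smul_eq_mul]
      linear_combination hx + t * hw
    have := mink_self_nonneg_of_tangent hp hxt
    unfold mink at this ⊢
    simp only [Pi.add_apply, Pi.smul_apply, smul_eq_mul] at this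
    linarith
  have := discrim_le_zero key
  unfold discrim at this
  nlinarith

/-- For `x` tangent at `q`, `⟨x|p⟩ ≤ ‖x‖ sinh d(p,q)`. -/
lemma mink_le_mnorm_mul_of_tangent (hp : p ∈ H2) (hq : q ∈ H2) (hx : mink x q = 0) :
    mink x p ≤ mnorm x * Real.sqrt (mink p q ^ 2 - 1) := by
  -- `p + ⟨p|q⟩ q` is the projection of `p` to the tangent plane at `q`.
  set e := mink p q with he
  set w : V := p + e • q
  have hqq : mink q q = -1 := hq.1
  have hpp : mink p p = -1 := hp.1
  have hwq : mink w q = 0 := by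
    simp only [w, mink, Pi.add_apply, Pi.smul_apply, smul_eq_mul] at he hqq ⊢
    linear_combination -he + e * hqq
  have hww : mink w w = e ^ 2 - 1 := by
    simp only [w, mink, Pi.add_apply, Pi.smul_apply, smul_eq_mul] at he hqq hpp ⊢
    linear_combination hpp - 2 * e * he + e ^ 2 * hqq
  have hxw : mink x w = mink x p := by
    simp only [w, mink, Pi.add_apply, Pi.smul_apply, smul_eq_mul] at hx ⊢
    linear_combination e * hx
  have hCS := sq_mink_le_of_tangent hq hx hwq
  rw [hxw, hww] at hCS
  calc mink x p ≤ Real.sqrt (mink x x * (e ^ 2 - 1)) := Real.le_sqrt_of_sq_le hCS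
  _ = mnorm x * Real.sqrt (e ^ 2 - 1) := Real.sqrt_mul (mink_self_nonneg_of_tangent hq hx) _

lemma hdist_eq_arcosh (p q : V) : hdist p q = Real.arcosh (-mink p q) := rfl

lemma hdist_self (hp : p ∈ H2) : hdist p p = 0 := by
  simp [hdist_eq_arcosh, hp.1]

lemma hdist_pos (hp : p ∈ H2) (hq : q ∈ H2) (hne : p ≠ q) : 0 < hdist p q :=
  Real.arcosh_pos (by linarith [mink_lt_neg_one hp hq hne])

lemma hdist_nonneg (hp : p ∈ H2) (hq : q ∈ H2) : 0 ≤ hdist p q := by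
  rcases eq_or_ne p q with rfl | hne
  exacts [(hdist_self hp).ge, (hdist_pos hp hq hne).le]

lemma isClosed_H2 : IsClosed H2 := by
  have : H2 = {p : V | mink p p = -1} ∩ {p | 1 ≤ p 2} := by
    ext p
    exact ⟨fun hp => ⟨hp.1, one_le_coord_two_of_mem_H2 hp⟩,
      fun hp => ⟨hp.1, by linarith [hp.2.out]⟩⟩
  rw [this]
  exact (isClosed_eq (continuous_mink.comp (continuous_id.prodMk continuous_id))
    continuous_const).inter (isClosed_le continuous_const (continuous_apply 2))

lemma isCompact_H2_inter_coord_two_le (C : ℝ) : IsCompact (H2 ∩ {p | p 2 ≤ C}) := by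
  refine (isCompact_closedBall (0 : V) C).of_isClosed_subset
    (isClosed_H2.inter (isClosed_le (continuous_apply 2) continuous_const))
    fun p ⟨hp, hpC⟩ => ?_
  have hs := sq_coord_two_of_mem_H2 hp
  have h2 := hp.2
  rw [mem_closedBall_zero_iff, pi_norm_le_iff_of_nonneg (h2.le.trans hpC)]
  intro i
  rw [Real.norm_eq_abs, abs_le]
  simp only [Set.mem_ofPred_eq] at hpC
  fin_cases i <;> simp only [Fin.zero_eta, Fin.mk_one, Fin.reduceFinMk, Fin.isValue] <;>
    constructor <;> nlinarith [sq_nonneg (p 0), sq_nonneg (p 1)]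

end Hyperboloid

def H2origin : V := ![0, 0, 1]

lemma H2origin_mem : H2origin ∈ H2 := by
  constructor <;> simp [H2origin, mink]

lemma mink_H2origin (x : V) : mink x H2origin = -x 2 := by
  simp [mink, H2origin]

lemma cosh_hdist_H2origin {p : V} (hp : p ∈ H2) : Real.cosh (hdist p H2origin) = p 2 := by
  rw [hdist_eq_arcosh, mink_H2origin, neg_neg, Real.cosh_arcosh (one_le_coord_two_of_mem_H2 hp)]

section Derivative

lemma mexp_zero (p x : V) : mexp p x 0 = p := by
  unfold mexp; split_ifs <;> simp

lemma hasDerivAt_mexp {p x : V} (hp : p ∈ H2) (hx : mink x p = 0) :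
    HasDerivAt (mexp p x) x 0 := by
  rcases eq_or_ne x 0 with rfl | hne
  · rw [show mexp p 0 = fun _ => p from funext fun t => by simp [mexp]]
    exact hasDerivAt_const 0 p
  have hn : mnorm x ≠ 0 := (Real.sqrt_pos.2 (mink_self_pos_of_tangent hp hx hne)).ne'
  have ht : HasDerivAt (fun t : ℝ => t * mnorm x) (mnorm x) 0 := by
    simpa using (hasDerivAt_id (0 : ℝ)).mul_const (mnorm x)
  have := (ht.cosh.smul_const p).add ((ht.sinh.div_const (mnorm x)).smul_const x)
  simp only [zero_mul, Real.sinh_zero, Real.cosh_zero, zero_smul, zero_add, one_mul, div_self hn,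
    one_smul] at this
  rwa [show mexp p x
      = fun t => Real.cosh (t * mnorm x) • p + (Real.sinh (t * mnorm x) / mnorm x) • x
    from funext fun t => by simp [mexp, hne]]

lemma HasDerivAt.mink {c₁ c₂ : ℝ → V} {a b : V} {t : ℝ} (h₁ : HasDerivAt c₁ a t)
    (h₂ : HasDerivAt c₂ b t) :
    HasDerivAt (fun s => mink (c₁ s) (c₂ s)) (mink a (c₂ t) + mink (c₁ t) b) t := by
  have h₁ := hasDerivAt_pi.1 h₁
  have h₂ := hasDerivAt_pi.1 h₂
  have h := (((h₁ 0).mul (h₂ 0)).add ((h₁ 1).mul (h₂ 1))).sub ((h₁ 2).mul (h₂ 2))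
  exact h.congr_deriv (by simp only [_root_.mink]; ring)

lemma dprime_eq {p q xp xq : V} (hp : p ∈ H2) (hq : q ∈ H2) (hne : p ≠ q)
    (hxp : mink xp p = 0) (hxq : mink xq q = 0) :
    dprime p xp q xq = -(mink xp q + mink p xq) / Real.sqrt (mink p q ^ 2 - 1) := by
  have hF : HasDerivAt (fun t => -mink (mexp p xp t) (mexp q xq t))
      (-(mink xp q + mink p xq)) 0 := by
    have := ((hasDerivAt_mexp hp hxp).mink (hasDerivAt_mexp hq hxq)).neg
    rw [mexp_zero, mexp_zero] at this
    exact this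
  have hA := (Real.hasDerivAt_arcosh (show 1 < -mink p q by
    linarith [mink_lt_neg_one hp hq hne])).comp_of_eq 0 hF (by simp only [mexp_zero])
  rw [dprime, show (fun t => hdist (mexp p xp t) (mexp q xq t))
    = Real.arcosh ∘ fun t => -mink (mexp p xp t) (mexp q xq t) from rfl, hA.deriv, neg_sq]
  ring

end Derivative

section VectorField

variable {X Y : V → V} {k : ℝ} {p q : V}

lemma IsVectorField.sub_mcross (hX : IsVectorField X) (v : V) :
    IsVectorField fun p => X p - mcross v p :=
  ⟨hX.1.sub (continuous_mcross.comp (continuous_const.prodMk continuous_id)).continuousOn,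
    fun p hp => by rw [mink_sub_left, hX.2 p hp, mink_mcross_self, sub_zero]⟩

/-- The Killing field `p ↦ v ∧ p` has `d' = 0`. -/
lemma LipschitzVF.sub_mcross (hX : IsVectorField X) (hlip : LipschitzVF k X) (v : V) :
    LipschitzVF k fun p => X p - mcross v p := by
  intro p hp q hq hne
  have hskew := mink_mcross_add_mink_mcross v p q
  rw [dprime_eq hp hq hne ((hX.sub_mcross v).2 p hp) ((hX.sub_mcross v).2 q hq), mink_sub_left,
    mink_sub_right]
  convert hlip p hp q hq hne using 1
  rw [dprime_eq hp hq hne (hX.2 p hp) (hX.2 q hq)]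
  congr 2
  linarith

lemma LipschitzVF.mul_sqrt_le_mink (hY : IsVectorField Y) (hlip : LipschitzVF k Y)
    (hp : p ∈ H2) (hq : q ∈ H2) :
    (-k * hdist p q - mnorm (Y q)) * Real.sqrt (mink p q ^ 2 - 1) ≤ mink (Y p) q := by
  rcases eq_or_ne p q with rfl | hne
  · simp [hp.1, hY.2 p hp]
  have hs : 0 < Real.sqrt (mink p q ^ 2 - 1) :=
    Real.sqrt_pos.2 (by nlinarith [mink_lt_neg_one hp hq hne])
  have h := hlip p hp q hq hne
  rw [dprime_eq hp hq hne (hY.2 p hp) (hY.2 q hq), div_le_iff₀ hs] at h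
  have hb := mink_le_mnorm_mul_of_tangent hp hq (hY.2 q hq)
  rw [mink_comm] at hb
  nlinarith

lemma LipschitzVF.eq_of_apply_eq_zero (hY : IsVectorField Y) (hlip : LipschitzVF k Y)
    (hk : k < 0) (hp : p ∈ H2) (hq : q ∈ H2) (hYp : Y p = 0) (hYq : Y q = 0) : p = q := by
  by_contra hne
  have h := hlip.mul_sqrt_le_mink hY hp hq
  rw [hYp, hYq, mink_zero_left, mnorm_zero, sub_zero] at h
  have hs : 0 < Real.sqrt (mink p q ^ 2 - 1) :=
    Real.sqrt_pos.2 (by nlinarith [mink_lt_neg_one hp hq hne])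
  nlinarith [mul_pos (mul_pos (neg_pos.2 hk) (hdist_pos hp hq hne)) hs]

lemma LipschitzVF.hdist_le_of_apply_eq_zero (hY : IsVectorField Y) (hlip : LipschitzVF k Y)
    (hp : p ∈ H2) (hq : q ∈ H2) (hYp : Y p = 0) : -k * hdist p q ≤ mnorm (Y q) := by
  rcases eq_or_ne p q with rfl | hne
  · simpa [hdist_self hp] using mnorm_nonneg _
  have h := hlip.mul_sqrt_le_mink hY hp hq
  rw [hYp, mink_zero_left] at h
  have hs : 0 < Real.sqrt (mink p q ^ 2 - 1) :=
    Real.sqrt_pos.2 (by nlinarith [mink_lt_neg_one hp hq hne])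
  nlinarith

lemma LipschitzVF.coord_two_le_cosh_of_apply_eq_zero (hY : IsVectorField Y)
    (hlip : LipschitzVF k Y) (hk : k < 0) (hp : p ∈ H2) (hYp : Y p = 0) :
    p 2 ≤ Real.cosh (mnorm (Y H2origin) / -k) := by
  rw [← cosh_hdist_H2origin hp, Real.cosh_le_cosh, abs_of_nonneg (hdist_nonneg hp H2origin_mem),
    abs_of_nonneg (div_nonneg (mnorm_nonneg _) (neg_pos.2 hk).le), le_div_iff₀ (neg_pos.2 hk)]
  linarith [hlip.hdist_le_of_apply_eq_zero hY hp H2origin_mem hYp]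

/-- Far from the origin, `Y` points towards it. -/
lemma LipschitzVF.coord_two_apply_neg (hY : IsVectorField Y) (hlip : LipschitzVF k Y)
    (hk : k < 0) (hp : p ∈ H2) (hfar : Real.cosh (mnorm (Y H2origin) / -k) < p 2) :
    Y p 2 < 0 := by
  set R := mnorm (Y H2origin) / -k
  have hR : 0 ≤ R := div_nonneg (mnorm_nonneg _) (neg_pos.2 hk).le
  have hd : R < hdist p H2origin := by
    rwa [← cosh_hdist_H2origin hp, Real.cosh_lt_cosh, abs_of_nonneg hR,
      abs_of_nonneg (hdist_nonneg hp H2origin_mem)] at hfar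
  have hkd : mnorm (Y H2origin) < -k * hdist p H2origin := by
    rwa [div_lt_iff₀ (neg_pos.2 hk), mul_comm] at hd
  have h := hlip.mul_sqrt_le_mink hY hp H2origin_mem
  simp only [mink_H2origin, neg_sq] at h
  have hs : 0 < Real.sqrt (p 2 ^ 2 - 1) := Real.sqrt_pos.2 (by nlinarith [Real.one_le_cosh R])
  nlinarith [mul_pos (sub_pos.2 hkd) hs]

end VectorField

section Winding

open Metric Complex ComplexConjugate
open scoped Real

lemma exists_continuous_log {A : Type*} [TopologicalSpace A] [SimplyConnectedSpace A]
    [LocallyPathConnectedSpace A] (f : C(A, ℂ)) (hf : ∀ a, f a ≠ 0) :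
    ∃ L : C(A, ℂ), ∀ a, exp (L a) = f a := by
  obtain ⟨a₀⟩ := (inferInstance : Nonempty A)
  obtain ⟨L, ⟨-, hL⟩, -⟩ := isCoveringMapOn_exp.existsUnique_continuousMap_lifts f
    (exp_log (hf a₀)) hf
  exact ⟨L, congrFun hL⟩

lemma eq_add_two_pi_I_of_exp_eq {φ : ℝ → ℂ} (hφ : Continuous φ)
    (hexp : ∀ θ : ℝ, exp (φ θ) = exp (θ * I)) : φ (2 * π) = φ 0 + 2 * π * I := by
  -- `φ θ - θ i` is continuous with values in the discrete set `2πiℤ`, hence constant.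
  have hmem (θ : ℝ) : φ θ - θ * I ∈ (AddSubgroup.zmultiples (2 * π * I) : Set ℂ) := by
    obtain ⟨n, hn⟩ := exp_eq_one_iff.1 (show exp (φ θ - θ * I) = 1 by
      rw [exp_sub, hexp, div_self (exp_ne_zero _)])
    exact ⟨n, by simp [hn]⟩
  have := isPreconnected_univ.constant_of_mapsTo
    (isDiscrete_iff_discreteTopology.2 (NormedSpace.discreteTopology_zmultiples _))
    (by fun_prop : Continuous fun θ : ℝ => φ θ - θ * I).continuousOn (fun θ _ => hmem θ)
    (Set.mem_univ (2 * π)) (Set.mem_univ 0)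
  push_cast at this
  linear_combination this

lemma exists_zero_of_inward {r : ℝ} (hr : 0 < r) {G : ℂ → ℂ}
    (hG : ContinuousOn G (closedBall 0 r))
    (hin : ∀ z : ℂ, ‖z‖ = r → (G z * conj z).re < 0) :
    ∃ z ∈ closedBall 0 r, G z = 0 := by
  by_contra! hne
  have : SimplyConnectedSpace (closedBall (0 : ℂ) r) :=
    have := (convex_closedBall (0 : ℂ) r).contractibleSpace ⟨0, mem_closedBall_self hr.le⟩
    inferInstance
  have := (convex_closedBall (0 : ℂ) r).locallyPathConnectedSpace
  obtain ⟨L, hL⟩ := exists_continuous_log ⟨_, hG.domRestrict⟩ fun z => hne z z.2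
  set c : ℝ → ℂ := fun θ => r * exp (θ * I)
  have hc_norm : ∀ θ, ‖c θ‖ = r := fun θ => by simp [c, norm_exp_ofReal_mul_I, hr.le]
  have hc_mem : ∀ θ, c θ ∈ closedBall 0 r := fun θ => by simp [hc_norm]
  have hc_ne : ∀ θ, c θ ≠ 0 := fun θ => by simp [c, hr.ne']
  -- `G` points inward on the circle, so `G / (-c)` takes values in the right half-plane,
  -- where the principal logarithm is continuous.
  set w : ℝ → ℂ := fun θ => G (c θ) / -c θ
  have hw_re : ∀ θ, 0 < (w θ).re := fun θ => by
    have h := hin (c θ) (hc_norm θ)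
    have hns : normSq (c θ) = r ^ 2 := by rw [normSq_eq_norm_sq, hc_norm]
    simp only [w, div_re, neg_re, neg_im, normSq_neg, hns]
    simp only [mul_re, conj_re, conj_im] at h
    rw [← add_div]; exact div_pos (by linarith) (by positivity)
  have hw_cont : Continuous w :=
    (hG.comp_continuous (by fun_prop) hc_mem).div (by fun_prop) fun θ => neg_ne_zero.2 (hc_ne θ)
  set φ : ℝ → ℂ := fun θ => L ⟨c θ, hc_mem θ⟩ - log (w θ) - (Real.log r + π * I)
  have hφ_cont : Continuous φ := by
    have : Continuous fun θ => log (w θ) :=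
      continuous_iff_continuousAt.2 fun θ => (hw_cont.continuousAt).clog (Or.inl (hw_re θ))
    have := L.continuous.comp ((by fun_prop : Continuous c).subtype_mk hc_mem)
    fun_prop
  have hφ_exp : ∀ θ : ℝ, exp (φ θ) = exp (θ * I) := fun θ => by
    have hw0 : w θ ≠ 0 := fun h => (hw_re θ).ne' (by simp [h])
    simp only [φ, exp_sub, exp_add, hL, exp_log hw0, ← ofReal_exp, Real.exp_log hr, exp_pi_mul_I]
    change G (c θ) / (G (c θ) / -c θ) / (r * -1) = exp (θ * I)
    field_simp [hne _ (hc_mem θ), hc_ne θ, hr.ne']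
    rfl
  have := eq_add_two_pi_I_of_exp_eq hφ_cont hφ_exp
  simp [φ, w, c, Real.pi_ne_zero] at this

end Winding

def H2chart (ζ : ℂ) : V := ![ζ.re, ζ.im, Real.sqrt (1 + ζ.re ^ 2 + ζ.im ^ 2)]

lemma H2chart_mem (ζ : ℂ) : H2chart ζ ∈ H2 := by
  have hs := Real.sq_sqrt (by positivity : (0 : ℝ) ≤ 1 + ζ.re ^ 2 + ζ.im ^ 2)
  refine ⟨?_, by simp only [H2chart, Fin.isValue, Matrix.cons_val, Real.sqrt_pos]; positivity⟩
  simp only [H2chart, mink, Matrix.cons_val_zero, Matrix.cons_val_one, Matrix.cons_val_two,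
    Matrix.tail_cons, Matrix.head_cons]
  linear_combination -hs

lemma continuous_H2chart : Continuous H2chart := by
  refine continuous_pi fun i => ?_
  fin_cases i <;>
    simp only [H2chart, Fin.zero_eta, Fin.mk_one, Fin.reduceFinMk, Fin.isValue,
      Matrix.cons_val_zero, Matrix.cons_val_one, Matrix.cons_val] <;>
    fun_prop

open Complex ComplexConjugate in
/-- In the chart `H2chart`, `Y` points inwards along a large circle. -/
lemma LipschitzVF.exists_apply_eq_zero {Y : V → V} {k : ℝ} (hY : IsVectorField Y)
    (hlip : LipschitzVF k Y) (hk : k < 0) : ∃ p ∈ H2, Y p = 0 := by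
  set ρ := Real.cosh (mnorm (Y H2origin) / -k)
  set G : ℂ → ℂ := fun ζ => Y (H2chart ζ) 0 + Y (H2chart ζ) 1 * I
  have hG : Continuous G := by
    have := hY.1.comp_continuous continuous_H2chart H2chart_mem
    exact (continuous_ofReal.comp ((continuous_apply 0).comp this)).add
      ((continuous_ofReal.comp ((continuous_apply 1).comp this)).mul continuous_const)
  have hin : ∀ ζ : ℂ, ‖ζ‖ = ρ → (G ζ * conj ζ).re < 0 := by
    intro ζ hζ
    have hp := H2chart_mem ζ
    have hρ : ζ.re ^ 2 + ζ.im ^ 2 = ρ ^ 2 := by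
      rw [← hζ, ← normSq_eq_norm_sq, normSq_apply]; ring
    have hfar : ρ < H2chart ζ 2 := by
      simp only [H2chart, Matrix.cons_val_two, Matrix.tail_cons, Matrix.head_cons]
      exact Real.lt_sqrt_of_sq_lt (by linarith)
    have hY2 := hlip.coord_two_apply_neg hY hk hp hfar
    have htan : mink (Y (H2chart ζ)) (H2chart ζ) = 0 := hY.2 _ hp
    have hG_re : (G ζ * conj ζ).re = Y (H2chart ζ) 0 * ζ.re + Y (H2chart ζ) 1 * ζ.im := by
      simp [G]
    have hcoord : Y (H2chart ζ) 0 * ζ.re + Y (H2chart ζ) 1 * ζ.im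
        = Y (H2chart ζ) 2 * H2chart ζ 2 := by
      unfold mink at htan
      simp only [H2chart, Matrix.cons_val_zero, Matrix.cons_val_one] at htan ⊢
      linarith
    rw [hG_re, hcoord]
    exact mul_neg_of_neg_of_pos hY2 hp.2
  obtain ⟨ζ, -, hζ⟩ := exists_zero_of_inward (Real.cosh_pos _) hG.continuousOn hin
  refine ⟨H2chart ζ, H2chart_mem ζ, eq_zero_of_tangent_of_coord_eq_zero (H2chart_mem ζ)
    (hY.2 _ (H2chart_mem ζ)) ?_ ?_⟩
  · simpa [G] using congrArg re hζ
  · simpa [G] using congrArg im hζ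

section Topology

open Filter Topology

variable {α β : Type*} [TopologicalSpace α] [TopologicalSpace β]

lemma continuousAt_of_isClosed_graph {f : α → β} {a : α} {s : Set β} (hs : IsCompact s)
    (hf : ∀ᶠ x in 𝓝 a, f x ∈ s) (hgraph : IsClosed {q : α × β | q.2 = f q.1}) :
    ContinuousAt f a := by
  refine hs.tendsto_nhds_of_unique_mapClusterPt hf fun y _ hy => ?_
  have : MapClusterPt (a, y) (𝓝 a) fun x => (x, f x) := by
    rw [((𝓝 a).basis_sets.prod_nhds (𝓝 y).basis_sets).mapClusterPt_iff_frequently]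
    rintro ⟨U, W⟩ ⟨hU, hW⟩
    exact ((mapClusterPt_iff_frequently.1 hy W hW).and_eventually hU).mono
      fun x hx => ⟨hx.2, hx.1⟩
  exact hgraph.mem_of_mapClusterPt this (Eventually.of_forall fun x => rfl)

lemma ProperlyDiscOn.of_semiconj {Γ : Type*} {act : Γ → α → α} {act' : Γ → β → β}
    {S : Set β} (h : ProperlyDiscOn act' S) {π : α → β} (hπ : Continuous π)
    (hπS : ∀ a, π a ∈ S) (hsemi : ∀ γ a, π (act γ a) = act' γ (π a)) :
    ProperlyDiscOn act Set.univ := by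
  intro K L _ _ hK hL
  have hS : ∀ A : Set α, π '' A ⊆ S := fun A => Set.image_subset_iff.2 fun a _ => hπS a
  refine (h _ _ (hS K) (hS L) (hK.image hπ) (hL.image hπ)).subset ?_
  rintro γ ⟨_, ⟨a, ha, rfl⟩, haL⟩
  exact ⟨π (act γ a), ⟨π a, Set.mem_image_of_mem π ha, (hsemi γ a).symm⟩,
    Set.mem_image_of_mem π haL⟩

end Topology

open Filter in
lemma LipschitzVF.continuous_of_mcross_eq {X : V → V} {k : ℝ} (hX : IsVectorField X)
    (hlip : LipschitzVF k X) (hk : k < 0) {ϖ : V → V}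
    (hϖ : ∀ v, ϖ v ∈ H2 ∧ mcross v (ϖ v) = X (ϖ v)) : Continuous ϖ := by
  have hzero : ∀ v, X (ϖ v) - mcross v (ϖ v) = 0 := fun v => sub_eq_zero.2 (hϖ v).2.symm
  have hgraph : IsClosed {q : V × V | q.2 = ϖ q.1} := by
    have : {q : V × V | q.2 = ϖ q.1}
        = {q : V × V | q.2 ∈ H2} ∩ (fun q => X q.2 - mcross q.1 q.2) ⁻¹' {0} := by
      ext ⟨v, p⟩
      simp only [Set.mem_ofPred_eq]
      constructor
      · rintro rfl
        exact ⟨(hϖ v).1, hzero v⟩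
      · rintro ⟨hp, hp0⟩
        exact (hlip.sub_mcross hX v).eq_of_apply_eq_zero (hX.sub_mcross v) hk hp (hϖ v).1 hp0
          (hzero v)
    rw [this]
    refine ContinuousOn.preimage_isClosed_of_isClosed ?_ (isClosed_H2.preimage continuous_snd)
      isClosed_singleton
    exact (hX.1.comp continuous_snd.continuousOn fun q hq => hq).sub continuous_mcross.continuousOn
  set b : V → ℝ := fun v => Real.cosh (mnorm (X H2origin - mcross v H2origin) / -k)
  have hb : Continuous b := by
    have : Continuous fun v : V => X H2origin - mcross v H2origin :=
      continuous_const.sub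
        (continuous_mcross.comp (continuous_id.prodMk (continuous_const (y := H2origin))))
    exact Real.continuous_cosh.comp ((Real.continuous_sqrt.comp
      (continuous_mink.comp (this.prodMk this))).div_const _)
  refine continuous_iff_continuousAt.2 fun v => continuousAt_of_isClosed_graph
    (isCompact_H2_inter_coord_two_le (b v + 1)) ?_ hgraph
  filter_upwards [hb.continuousAt.eventually (gt_mem_nhds (lt_add_one (b v)))] with w hw
  exact ⟨(hϖ w).1, ((hlip.sub_mcross hX w).coord_two_le_cosh_of_apply_eq_zero (hX.sub_mcross w)
    hk (hϖ w).1 (hzero w)).trans hw.le⟩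

theorem statement3_general {Γ : Type*} [Group Γ] (j : Γ →* GL3) (hG0 : ∀ γ : Γ, InG0 (j γ))
    (hpd : ProperlyDiscOn (fun (γ : Γ) (p : V) => j γ p) H2)
    (u : Γ → V)
    (X : V → V) (hX : IsVectorField X) (heq : EquivVF j u X)
    (k : ℝ) (hk : k < 0) (hlip : LipschitzVF k X) :
    ∃ ϖ : V → V,
      (∀ v : V, ϖ v ∈ H2 ∧ mcross v (ϖ v) = X (ϖ v) ∧
        ∀ p ∈ H2, mcross v p = X p → p = ϖ v) ∧
      (Continuous ϖ ∧ ∀ p ∈ H2, ∃ v : V, ϖ v = p) ∧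
      (∀ (γ : Γ) (v : V), ϖ (j γ v + u γ) = j γ (ϖ v)) ∧
      ProperlyDiscOn (fun (γ : Γ) (v : V) => j γ v + u γ) Set.univ := by
  choose ϖ hϖH2 hϖ using fun v =>
    (hlip.sub_mcross hX v).exists_apply_eq_zero (hX.sub_mcross v) hk
  have hϖeq : ∀ v, mcross v (ϖ v) = X (ϖ v) := fun v => (sub_eq_zero.1 (hϖ v)).symm
  have huniq : ∀ v, ∀ p ∈ H2, mcross v p = X p → p = ϖ v := fun v p hp h =>
    (hlip.sub_mcross hX v).eq_of_apply_eq_zero (hX.sub_mcross v) hk hp (hϖH2 v)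
      (sub_eq_zero.2 h.symm) (hϖ v)
  have hcont : Continuous ϖ := hlip.continuous_of_mcross_eq hX hk fun v => ⟨hϖH2 v, hϖeq v⟩
  have hequiv : ∀ (γ : Γ) (v : V), ϖ (j γ v + u γ) = j γ (ϖ v) := fun γ v =>
    (huniq _ _ ((hG0 γ).2.2 _ (hϖH2 v)) (by
      rw [mcross_add_left, (hG0 γ).map_mcross, hϖeq, heq γ _ (hϖH2 v)])).symm
  have hsurj : ∀ p ∈ H2, ∃ v, ϖ v = p := fun p hp =>
    ⟨mcross p (X p), (huniq _ p hp (mcross_mcross_of_mink_eq_zero hp (hX.2 p hp))).symm⟩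
  exact ⟨ϖ, fun v => ⟨hϖH2 v, hϖeq v, huniq v⟩, ⟨hcont, hsurj⟩, hequiv,
    hpd.of_semiconj hcont hϖH2 hequiv⟩

/-- Proposition 6.2.(2): a `(j,u)`-equivariant vector field with negative
lipschitz constant yields an equivariant fibration `ϖ` of Minkowski space over `ℍ²` by timelike
geodesic lines, and in particular the affine action of `Γ` on `ℝ³` is properly discontinuous. -/
theorem statement3 {Γ : Type*} [Group Γ] (j : Γ →* GL3) (hG0 : ∀ γ : Γ, InG0 (j γ))
    (hpd : ProperlyDiscOn (fun (γ : Γ) (p : V) => j γ p) H2)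
    (u : Γ → V) (hu : IsCocycle j u)
    (X : V → V) (hX : IsVectorField X) (heq : EquivVF j u X)
    (k : ℝ) (hk : k < 0) (hlip : LipschitzVF k X) :
    ∃ ϖ : V → V,
      (∀ v : V, ϖ v ∈ H2 ∧ mcross v (ϖ v) = X (ϖ v) ∧
        ∀ p ∈ H2, mcross v p = X p → p = ϖ v) ∧
      (Continuous ϖ ∧ ∀ p ∈ H2, ∃ v : V, ϖ v = p) ∧
      (∀ (γ : Γ) (v : V), ϖ (j γ v + u γ) = j γ (ϖ v)) ∧
      ProperlyDiscOn (fun (γ : Γ) (v : V) => j γ v + u γ) Set.univ :=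
  statement3_general j hG0 hpd u X hX heq k hk hlip
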